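/- Let p be a purely imaginary complex number (p̄ = −p). Then there exists a unique star structure ★ on the Jordanian quantum group SL_p^{(j)}(2,ℂ) with α^★ = α + pγ, β^★ = β − pα − p²γ + pδ, γ^★ = γ, δ^★ = δ − pγ, and it is a Hopf star structure: Δ(x^★) = (★ ⊗ ★)(Δ(x)) for all x, where Δ is the matrix comultiplication. (This real form is the Jordanian quantum group SL_p^{(j)}(2,ℝ).) -/

import Mathlib

/-!
The prescribed values extend to a conjugate-linear anti-homomorphism of the free algebra on
`α, β, γ, δ`. Because `p̄ = -p`, it sends each defining relation to a consequence of the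
relations (normal-order both sides), so it descends to `SL_p^{(j)}(2,ℂ)`; it squares to the
identity on the generators, hence everywhere. Uniqueness and the Hopf property both rest on
one observation: two additive anti-multiplicative maps out of a quotient of a free algebra that
agree on scalars and generators coincide. For the Hopf property it is applied to `Δ ∘ ★` and
`(★ ⊗ ★) ∘ Δ`, the latter being anti-multiplicative because `★` is.
-/

noncomputable section

open FreeAlgebra
open scoped TensorProduct

/-- The defining relations of the Jordanian quantum group `SL_p^{(j)}(2,ℂ)`,
with generators `α = ι ℂ 0`, `β = ι ℂ 1`, `γ = ι ℂ 2`, `δ = ι ℂ 3`. -/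
inductive JRel (p : ℂ) : FreeAlgebra ℂ (Fin 4) → FreeAlgebra ℂ (Fin 4) → Prop
  | ab : JRel p (ι ℂ 0 * ι ℂ 1 - ι ℂ 1 * ι ℂ 0) (p • (ι ℂ 0 * ι ℂ 0) - p • 1)
  | ag : JRel p (ι ℂ 0 * ι ℂ 2 - ι ℂ 2 * ι ℂ 0) ((-p) • (ι ℂ 2 * ι ℂ 2))
  | bd : JRel p (ι ℂ 1 * ι ℂ 3 - ι ℂ 3 * ι ℂ 1) (p • 1 - p • (ι ℂ 3 * ι ℂ 3))
  | gd : JRel p (ι ℂ 2 * ι ℂ 3 - ι ℂ 3 * ι ℂ 2) (p • (ι ℂ 2 * ι ℂ 2))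
  | ad : JRel p (ι ℂ 0 * ι ℂ 3 - ι ℂ 3 * ι ℂ 0) (p • ((ι ℂ 0 - ι ℂ 3) * ι ℂ 2))
  | bg : JRel p (ι ℂ 1 * ι ℂ 2 - ι ℂ 2 * ι ℂ 1)
      ((-p) • (ι ℂ 0 * ι ℂ 2) - p • (ι ℂ 2 * ι ℂ 3))
  | det : JRel p (ι ℂ 0 * ι ℂ 3 - ι ℂ 1 * ι ℂ 2 - p • (ι ℂ 0 * ι ℂ 2)) 1

/-- The Jordanian quantum group `SL_p^{(j)}(2,ℂ)`. -/
abbrev SLj (p : ℂ) := RingQuot (JRel p)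

/-- The images of the generators `α, β, γ, δ` in `SL_p^{(j)}(2,ℂ)`. -/
def gen (p : ℂ) (i : Fin 4) : SLj p := RingQuot.mkAlgHom ℂ (JRel p) (ι ℂ i)

/-- A star structure on a complex algebra: additive, conjugate-linear,
antimultiplicative, unital, involutive. -/
def IsStar {A : Type*} [Ring A] [Algebra ℂ A] (st : A → A) : Prop :=
  (∀ x y : A, st (x + y) = st x + st y) ∧
  (∀ (z : ℂ) (x : A), st (z • x) = (starRingEnd ℂ) z • st x) ∧
  (∀ x y : A, st (x * y) = st y * st x) ∧
  st 1 = 1 ∧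
  (∀ x : A, st (st x) = x)

/-- `Δ` is the matrix comultiplication of `SL_p^{(j)}(2,ℂ)`. -/
def IsComul (p : ℂ) (Δ : SLj p →ₐ[ℂ] (SLj p ⊗[ℂ] SLj p)) : Prop :=
  Δ (gen p 0) = gen p 0 ⊗ₜ[ℂ] gen p 0 + gen p 1 ⊗ₜ[ℂ] gen p 2 ∧
  Δ (gen p 1) = gen p 0 ⊗ₜ[ℂ] gen p 1 + gen p 1 ⊗ₜ[ℂ] gen p 3 ∧
  Δ (gen p 2) = gen p 2 ⊗ₜ[ℂ] gen p 0 + gen p 3 ⊗ₜ[ℂ] gen p 2 ∧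
  Δ (gen p 3) = gen p 2 ⊗ₜ[ℂ] gen p 1 + gen p 3 ⊗ₜ[ℂ] gen p 3

/-- The prescribed values of the star structure on the generators:
`α^★ = α + pγ`, `β^★ = β − pα − p²γ + pδ`, `γ^★ = γ`, `δ^★ = δ − pγ`. -/
def StarVals (p : ℂ) (st : SLj p → SLj p) : Prop :=
  st (gen p 0) = gen p 0 + p • gen p 2 ∧
  st (gen p 1) = gen p 1 - p • gen p 0 - (p ^ 2) • gen p 2 + p • gen p 3 ∧
  st (gen p 2) = gen p 2 ∧
  st (gen p 3) = gen p 3 - p • gen p 2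

namespace FreeAlgebra

variable {R X B : Type*} [CommSemiring R] [Semiring B]

def liftRingHom (f : R →+* B) (hf : ∀ r b, f r * b = b * f r) (g : X → B) :
    FreeAlgebra R X →+* B :=
  letI := f.toAlgebra' hf
  (lift R g).toRingHom

theorem liftRingHom_ι (f : R →+* B) (hf : ∀ r b, f r * b = b * f r) (g : X → B) (i : X) :
    liftRingHom f hf g (ι R i) = g i :=
  letI := f.toAlgebra' hf
  lift_ι_apply g i

theorem liftRingHom_algebraMap (f : R →+* B) (hf : ∀ r b, f r * b = b * f r) (g : X → B)
    (r : R) : liftRingHom f hf g (algebraMap R _ r) = f r :=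
  letI := f.toAlgebra' hf
  (lift R g).commutes r

end FreeAlgebra

namespace RingQuot

variable {R X : Type*} [CommSemiring R] {r : FreeAlgebra R X → FreeAlgebra R X → Prop}

theorem freeAlgebra_induction {P : RingQuot r → Prop}
    (algebraMap : ∀ z, P (algebraMap R _ z)) (ι : ∀ i, P (mkAlgHom R r (FreeAlgebra.ι R i)))
    (mul : ∀ x y, P x → P y → P (x * y)) (add : ∀ x y, P x → P y → P (x + y))
    (x : RingQuot r) : P x := by
  obtain ⟨y, rfl⟩ := mkAlgHom_surjective R r x
  induction y using FreeAlgebra.induction with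
  | grade0 z => rw [AlgHom.commutes]; exact algebraMap z
  | grade1 i => exact ι i
  | mul u v hu hv => rw [map_mul]; exact mul _ _ hu hv
  | add u v hu hv => rw [map_add]; exact add _ _ hu hv

theorem freeAlgebra_antimul_ext {B : Type*} [Semiring B] {f g : RingQuot r → B}
    (hf_add : ∀ x y, f (x + y) = f x + f y) (hf_mul : ∀ x y, f (x * y) = f y * f x)
    (hg_add : ∀ x y, g (x + y) = g x + g y) (hg_mul : ∀ x y, g (x * y) = g y * g x)
    (h_algebraMap : ∀ z, f (algebraMap R _ z) = g (algebraMap R _ z))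
    (h_ι : ∀ i, f (mkAlgHom R r (FreeAlgebra.ι R i)) = g (mkAlgHom R r (FreeAlgebra.ι R i))) :
    f = g :=
  funext <| freeAlgebra_induction h_algebraMap h_ι
    (fun x y hx hy => by rw [hf_mul, hg_mul, hx, hy])
    (fun x y hx hy => by rw [hf_add, hg_add, hx, hy])

end RingQuot

namespace TensorProduct

variable {R R₂ A B A₂ B₂ : Type*} [CommSemiring R] [CommSemiring R₂] {σ : R →+* R₂}
  [Semiring A] [Semiring B] [Algebra R A] [Algebra R B]
  [Semiring A₂] [Semiring B₂] [Algebra R₂ A₂] [Algebra R₂ B₂]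

theorem map_mul_rev {f : A →ₛₗ[σ] A₂} {g : B →ₛₗ[σ] B₂}
    (hf : ∀ x y, f (x * y) = f y * f x) (hg : ∀ x y, g (x * y) = g y * g x) (u v : A ⊗[R] B) :
    map f g (u * v) = map f g v * map f g u := by
  induction u using TensorProduct.induction_on with
  | zero => simp
  | add u₁ u₂ h₁ h₂ => rw [add_mul, map_add, map_add, h₁, h₂, mul_add]
  | tmul x y =>
    induction v using TensorProduct.induction_on with
    | zero => simp
    | add v₁ v₂ h₁ h₂ => rw [mul_add, map_add, h₁, h₂, map_add, add_mul]
    | tmul x' y' => simp only [Algebra.TensorProduct.tmul_mul_tmul, map_tmul, hf, hg]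

end TensorProduct

namespace IsStar

variable {A : Type*} [Ring A] [Algebra ℂ A] {st : A → A}

def toSemilinearMap (h : IsStar st) : A →ₛₗ[starRingEnd ℂ] A where
  toFun := st
  map_add' := h.1
  map_smul' := h.2.1

@[simp]
theorem coe_toSemilinearMap (h : IsStar st) : ⇑h.toSemilinearMap = st := rfl

theorem map_algebraMap (h : IsStar st) (z : ℂ) :
    st (algebraMap ℂ A z) = algebraMap ℂ A (starRingEnd ℂ z) := by
  rw [Algebra.algebraMap_eq_smul_one, h.2.1, h.2.2.2.1, Algebra.algebraMap_eq_smul_one]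

end IsStar

namespace SLj

open MulOpposite

variable (p : ℂ)

section Relations

local notation "α" => gen p 0
local notation "β" => gen p 1
local notation "γ" => gen p 2
local notation "δ" => gen p 3

theorem α_mul_β : α * β = β * α + (p • (α * α) - p • 1) :=
  sub_eq_iff_eq_add'.mp <| by simpa [gen] using RingQuot.mkAlgHom_rel ℂ (JRel.ab (p := p))

theorem α_mul_γ : α * γ = γ * α + -(p • (γ * γ)) :=
  sub_eq_iff_eq_add'.mp <| by simpa [gen] using RingQuot.mkAlgHom_rel ℂ (JRel.ag (p := p))

theorem β_mul_δ : β * δ = δ * β + (p • 1 - p • (δ * δ)) :=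
  sub_eq_iff_eq_add'.mp <| by simpa [gen] using RingQuot.mkAlgHom_rel ℂ (JRel.bd (p := p))

theorem γ_mul_δ : γ * δ = δ * γ + p • (γ * γ) :=
  sub_eq_iff_eq_add'.mp <| by simpa [gen] using RingQuot.mkAlgHom_rel ℂ (JRel.gd (p := p))

theorem α_mul_δ : α * δ = δ * α + p • ((α - δ) * γ) :=
  sub_eq_iff_eq_add'.mp <| by simpa [gen] using RingQuot.mkAlgHom_rel ℂ (JRel.ad (p := p))

theorem β_mul_γ : β * γ = γ * β + (-(p • (α * γ)) - p • (γ * δ)) :=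
  sub_eq_iff_eq_add'.mp <| by simpa [gen] using RingQuot.mkAlgHom_rel ℂ (JRel.bg (p := p))

theorem det_eq_one : α * δ - β * γ - p • (α * γ) = 1 := by
  simpa [gen] using RingQuot.mkAlgHom_rel ℂ (JRel.det (p := p))

end Relations

def starGen : Fin 4 → SLj p
  | 0 => gen p 0 + p • gen p 2
  | 1 => gen p 1 - p • gen p 0 - (p ^ 2) • gen p 2 + p • gen p 3
  | 2 => gen p 2
  | 3 => gen p 3 - p • gen p 2

theorem starVals_iff {st : SLj p → SLj p} : StarVals p st ↔ ∀ i, st (gen p i) = starGen p i :=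
  ⟨fun ⟨h₀, h₁, h₂, h₃⟩ i => by fin_cases i <;> assumption, fun h => ⟨h 0, h 1, h 2, h 3⟩⟩

def starFree : FreeAlgebra ℂ (Fin 4) →+* (SLj p)ᵐᵒᵖ :=
  FreeAlgebra.liftRingHom ((algebraMap ℂ (SLj p)ᵐᵒᵖ).comp (starRingEnd ℂ))
    (fun z x => Algebra.commutes (starRingEnd ℂ z) x) (fun i => op (starGen p i))

theorem starFree_smul (z : ℂ) (x : FreeAlgebra ℂ (Fin 4)) :
    starFree p (z • x) = starRingEnd ℂ z • starFree p x := by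
  rw [Algebra.smul_def, map_mul, starFree, FreeAlgebra.liftRingHom_algebraMap, ← starFree,
    RingHom.comp_apply, ← Algebra.smul_def]

theorem starFree_ι (i : Fin 4) : starFree p (ι ℂ i) = op (starGen p i) :=
  FreeAlgebra.liftRingHom_ι _ _ _ i

variable {p}

theorem starFree_rel (hp : starRingEnd ℂ p = -p) ⦃x y : FreeAlgebra ℂ (Fin 4)⦄
    (h : JRel p x y) : starFree p x = starFree p y := by
  apply unop_injective
  cases h <;>
    simp only [map_sub, map_mul, map_one, map_neg, unop_neg, starFree_smul, starFree_ι,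
      unop_sub, unop_mul, unop_smul, unop_one, unop_op, hp, neg_smul]
  -- in the `det` case expand `1` by the quantum determinant; then normal-order (`δ < γ < β < α`)
  -- with the commutation relations and compare coefficients
  case' det => rw [← det_eq_one p]
  all_goals
    simp only [starGen, α_mul_β, α_mul_γ, β_mul_δ, γ_mul_δ, α_mul_δ, β_mul_γ, mul_add, add_mul,
      mul_sub, sub_mul, smul_mul_assoc, mul_smul_comm, smul_smul, smul_sub, smul_add, smul_neg,
      neg_smul]
    module

variable (hp : starRingEnd ℂ p = -p)

def realStar (x : SLj p) : SLj p :=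
  (RingQuot.lift ⟨starFree p, starFree_rel hp⟩ x).unop

theorem realStar_mkAlgHom (x : FreeAlgebra ℂ (Fin 4)) :
    realStar hp (RingQuot.mkAlgHom ℂ (JRel p) x) = (starFree p x).unop := by
  rw [realStar, ← AlgHom.coe_toRingHom, RingQuot.mkAlgHom_coe, RingQuot.lift_mkRingHom_apply]

theorem realStar_gen (i : Fin 4) : realStar hp (gen p i) = starGen p i := by
  rw [gen, realStar_mkAlgHom, starFree_ι, unop_op]

theorem realStar_add (x y : SLj p) : realStar hp (x + y) = realStar hp x + realStar hp y := by
  simp only [realStar, map_add, unop_add]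

theorem realStar_sub (x y : SLj p) : realStar hp (x - y) = realStar hp x - realStar hp y := by
  simp only [realStar, map_sub, unop_sub]

theorem realStar_mul (x y : SLj p) : realStar hp (x * y) = realStar hp y * realStar hp x := by
  simp only [realStar, map_mul, unop_mul]

theorem realStar_smul (z : ℂ) (x : SLj p) :
    realStar hp (z • x) = starRingEnd ℂ z • realStar hp x := by
  obtain ⟨y, rfl⟩ := RingQuot.mkAlgHom_surjective ℂ (JRel p) x
  rw [← map_smul, realStar_mkAlgHom, realStar_mkAlgHom, starFree_smul, unop_smul]

theorem realStar_one : realStar hp 1 = 1 := by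
  simp only [realStar, map_one, unop_one]

theorem realStar_algebraMap (z : ℂ) :
    realStar hp (algebraMap ℂ _ z) = algebraMap ℂ _ (starRingEnd ℂ z) := by
  rw [Algebra.algebraMap_eq_smul_one, realStar_smul, realStar_one, Algebra.algebraMap_eq_smul_one]

theorem realStar_realStar_gen (i : Fin 4) : realStar hp (realStar hp (gen p i)) = gen p i := by
  fin_cases i <;>
    simp only [Fin.reduceFinMk, realStar_gen, starGen, realStar_add, realStar_sub, realStar_smul,
      map_pow, hp] <;>
    module

theorem realStar_realStar (x : SLj p) : realStar hp (realStar hp x) = x := by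
  induction x using RingQuot.freeAlgebra_induction with
  | algebraMap z => rw [realStar_algebraMap, realStar_algebraMap, Complex.conj_conj]
  | ι i => exact realStar_realStar_gen hp i
  | mul x y hx hy => rw [realStar_mul, realStar_mul, hx, hy]
  | add x y hx hy => rw [realStar_add, realStar_add, hx, hy]

theorem isStar_realStar : IsStar (realStar hp) :=
  ⟨realStar_add hp, realStar_smul hp, realStar_mul hp, realStar_one hp, realStar_realStar hp⟩

theorem starVals_realStar : StarVals p (realStar hp) :=
  (starVals_iff p).mpr (realStar_gen hp)

theorem eq_realStar {st : SLj p → SLj p} (hst : IsStar st) (hvals : StarVals p st) :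
    st = realStar hp :=
  RingQuot.freeAlgebra_antimul_ext hst.1 hst.2.2.1 (realStar_add hp) (realStar_mul hp)
    (fun z => by rw [hst.map_algebraMap, realStar_algebraMap])
    (fun i => by rw [← gen, (starVals_iff p).mp hvals, realStar_gen])

section Comul

variable {st : SLj p → SLj p} {Δ : SLj p →ₐ[ℂ] SLj p ⊗[ℂ] SLj p}

theorem comul_star_gen (hst : IsStar st) (hvals : StarVals p st) (hΔ : IsComul p Δ)
    (i : Fin 4) :
    Δ (st (gen p i)) =
      TensorProduct.map hst.toSemilinearMap hst.toSemilinearMap (Δ (gen p i)) := by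
  obtain ⟨v₀, v₁, v₂, v₃⟩ := hvals
  obtain ⟨d₀, d₁, d₂, d₃⟩ := hΔ
  -- otherwise `module` sees the tensor product only as an additive monoid
  let : AddCommGroup (SLj p ⊗[ℂ] SLj p) := TensorProduct.addCommGroup
  fin_cases i <;>
    simp only [Fin.reduceFinMk, v₀, v₁, v₂, v₃, d₀, d₁, d₂, d₃, map_add, map_sub, map_smul,
      TensorProduct.map_tmul, IsStar.coe_toSemilinearMap, TensorProduct.add_tmul,
      TensorProduct.tmul_add, TensorProduct.sub_tmul, TensorProduct.tmul_sub,
      TensorProduct.tmul_smul, ← TensorProduct.smul_tmul', smul_add, smul_sub, smul_smul] <;>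
    module

theorem comul_star (hst : IsStar st) (hvals : StarVals p st) (hΔ : IsComul p Δ) (x : SLj p) :
    Δ (st x) = TensorProduct.map hst.toSemilinearMap hst.toSemilinearMap (Δ x) := by
  obtain ⟨st_add, -, st_mul, st_one, -⟩ := id hst
  have hmap_mul := TensorProduct.map_mul_rev (f := hst.toSemilinearMap)
    (g := hst.toSemilinearMap) st_mul st_mul
  refine congrFun (RingQuot.freeAlgebra_antimul_ext (f := Δ ∘ st) (g := _ ∘ Δ)
    (fun x y => by simp only [Function.comp_apply, st_add, map_add])
    (fun x y => by simp only [Function.comp_apply, st_mul, map_mul])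
    (fun x y => by simp only [Function.comp_apply, map_add])
    (fun x y => by simp only [Function.comp_apply, map_mul, hmap_mul])
    (fun z => ?_) (comul_star_gen hst hvals hΔ)) x
  simp only [Function.comp_apply, hst.map_algebraMap, AlgHom.commutes,
    Algebra.TensorProduct.algebraMap_apply, TensorProduct.map_tmul, IsStar.coe_toSemilinearMap,
    st_one]

end Comul

end SLj

/-- For purely imaginary `p` there is a unique star structure on the Jordanian quantum
group `SL_p^{(j)}(2,ℂ)` with the prescribed values, and it is a Hopf star structure.
(The real form `SL_p^{(j)}(2,ℝ)`.) -/
theorem jordanian_star_exists_unique (p : ℂ) (hp : (starRingEnd ℂ) p = -p) :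
    (∃! st : SLj p → SLj p, IsStar st ∧ StarVals p st) ∧
    (∀ st : SLj p → SLj p, IsStar st ∧ StarVals p st →
      ∀ Δ : SLj p →ₐ[ℂ] (SLj p ⊗[ℂ] SLj p), IsComul p Δ →
        ∃ T : (SLj p ⊗[ℂ] SLj p) → (SLj p ⊗[ℂ] SLj p),
          (∀ u v : SLj p ⊗[ℂ] SLj p, T (u + v) = T u + T v) ∧
          (∀ x y : SLj p, T (x ⊗ₜ[ℂ] y) = st x ⊗ₜ[ℂ] st y) ∧
          (∀ x : SLj p, Δ (st x) = T (Δ x))) := by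
  refine ⟨⟨SLj.realStar hp, ⟨SLj.isStar_realStar hp, SLj.starVals_realStar hp⟩,
    fun st ⟨hst, hvals⟩ => SLj.eq_realStar hp hst hvals⟩, ?_⟩
  rintro st ⟨hst, hvals⟩ Δ hΔ
  exact ⟨TensorProduct.map hst.toSemilinearMap hst.toSemilinearMap, map_add _,
    fun x y => TensorProduct.map_tmul _ _ x y, SLj.comul_star hst hvals hΔ⟩
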